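/- arXiv:1011.3685 — 5 statements merged into one kernel-verified Lean document; each statement's English description precedes it below -/
import Mathlib

section
/- Let g¹ and g² be uniformly Lipschitz generators. Then the following two conditions are equivalent. (a) There exists a constant C > 0 such that for all t ∈ [0,T], all y, y′ ∈ ℝⁿ and all z, z′ ∈ ℝ^{n×d}: −4⟨y⁻, g¹(t, y⁺ + y′, z) − g²(t, y′, z′)⟩ ≤ 2·∑_{k=1}^{n} 1_{y_k<0}·|z_k − z′_k|² + C·|y⁻|². (b) For every k ∈ {1,…,n}, every t ∈ [0,T], every y′ ∈ ℝⁿ, every δ ∈ ℝⁿ with δ ≥ 0 and δ_k = 0, and all z, z′ ∈ ℝ^{n×d} with z_k = z′_k, one has g¹_k(t, δ + y′, z) ≥ g²_k(t, y′, z′). (Condition (a) is Hu–Peng's necessary and sufficient criterion for the multidimensional comparison theorem; the theorem asserts its equivalence with the explicit condition (b).) -/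
open scoped RealInnerProductSpace

noncomputable section

/-- `ℝⁿ` with the Euclidean norm. -/
abbrev Vec (n : ℕ) := EuclideanSpace ℝ (Fin n)

/-- Real `n × d` matrices with the Frobenius norm. -/
abbrev Mat (n d : ℕ) := EuclideanSpace ℝ (Fin n × Fin d)

/-- The `k`-th row of a matrix. -/
def row {n d : ℕ} (z : Mat n d) (k : Fin n) : Vec d := WithLp.toLp 2 (fun j => z (k, j))

/-- Componentwise positive part. -/
def pos {n : ℕ} (x : Vec n) : Vec n := WithLp.toLp 2 (fun i => max (x i) 0)

/-- Componentwise negative part. -/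
def neg {n : ℕ} (x : Vec n) : Vec n := WithLp.toLp 2 (fun i => max (-(x i)) 0)

/-- A generator is uniformly Lipschitz on `[0,T]`. -/
def UniformlyLipschitz {n d : ℕ} (T : ℝ)
    (g : ℝ → Vec n → Mat n d → Vec n) : Prop :=
  ∃ L : ℝ, 0 ≤ L ∧ ∀ t ∈ Set.Icc (0:ℝ) T, ∀ y y' : Vec n, ∀ z z' : Mat n d,
    ‖g t y z - g t y' z'‖ ≤ L * (‖y - y'‖ + ‖z - z'‖)

/-!
(a) ⇒ (b): if `g¹_k(t, δ + y', z) < g²_k(t, y', z')` for some admissible `δ, z, z'`, test (a) at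
`y = δ - ε e_k`. Then `y⁺ = δ`, `y⁻ = ε e_k` and the `z`-term vanishes since `z_k = z'_k`, so (a)
reads `-4 ε Δ ≤ C ε²` with `Δ < 0`, which fails for small `ε > 0`.

(b) ⇒ (a): the inner product splits over coordinates and only those with `y_k < 0` contribute;
there `y⁺_k = 0`. Replacing the `k`-th row of `z` by that of `z'` costs at most `L |z_k - z'_k|` in
`g¹`, after which (b) applies, so `g¹_k - g²_k ≥ -L |z_k - z'_k|`. Finally
`4 a L r ≤ 2 r² + 2 L² a²`, giving (a) with `C = 2 L² + 1`.
-/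

section

variable {n d : ℕ}

def updateRow (z : Mat n d) (k : Fin n) (w : Vec d) : Mat n d :=
  WithLp.toLp 2 fun p => if p.1 = k then w p.2 else z p

lemma row_updateRow_self (z : Mat n d) (k : Fin n) (w : Vec d) :
    row (updateRow z k w) k = w := by
  ext j
  simp [row, updateRow]

lemma norm_sub_updateRow (z : Mat n d) (k : Fin n) (w : Vec d) :
    ‖z - updateRow z k w‖ = ‖row z k - w‖ := by
  rw [← sq_eq_sq₀ (norm_nonneg _) (norm_nonneg _), EuclideanSpace.real_norm_sq_eq,
    EuclideanSpace.real_norm_sq_eq, Fintype.sum_prod_type, Finset.sum_eq_single k]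
  · simp [row, updateRow]
  · intro i _ hi
    simp [updateRow, hi]
  · simp

lemma pos_sub_single {δ : Vec n} (hδ : ∀ i, 0 ≤ δ i) {k : Fin n} (hδk : δ k = 0) {ε : ℝ}
    (hε : 0 ≤ ε) : pos (δ - EuclideanSpace.single k ε) = δ := by
  ext i
  by_cases hi : i = k
  · subst hi
    simp [pos, hδk, hε]
  · simp [pos, hi, hδ i]

lemma neg_sub_single {δ : Vec n} (hδ : ∀ i, 0 ≤ δ i) {k : Fin n} (hδk : δ k = 0) {ε : ℝ}
    (hε : 0 ≤ ε) : neg (δ - EuclideanSpace.single k ε) = EuclideanSpace.single k ε := by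
  ext i
  by_cases hi : i = k
  · subst hi
    simp [neg, hδk, hε]
  · simp [neg, hi, hδ i]

/-- Condition (b) of the theorem. -/
def QuasiMonotoneDomination (T : ℝ) (g₁ g₂ : ℝ → Vec n → Mat n d → Vec n) : Prop :=
  ∀ k : Fin n, ∀ t ∈ Set.Icc (0:ℝ) T, ∀ y' δ : Vec n,
    (∀ i, 0 ≤ δ i) → δ k = 0 →
    ∀ z z' : Mat n d, row z k = row z' k →
      g₂ t y' z' k ≤ g₁ t (δ + y') z k

/-- Condition (a) of the theorem, for a fixed constant `C`. -/
def HuPengCriterion (T : ℝ) (g₁ g₂ : ℝ → Vec n → Mat n d → Vec n) (C : ℝ) : Prop :=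
  ∀ t ∈ Set.Icc (0:ℝ) T, ∀ y y' : Vec n, ∀ z z' : Mat n d,
    -4 * ⟪neg y, g₁ t (pos y + y') z - g₂ t y' z'⟫ ≤
      2 * ∑ k : Fin n, (if y k < 0 then (1:ℝ) else 0) * ‖row z k - row z' k‖ ^ 2
        + C * ‖neg y‖ ^ 2

variable {T : ℝ} {g₁ g₂ : ℝ → Vec n → Mat n d → Vec n}

theorem HuPengCriterion.quasiMonotoneDomination {C : ℝ} (h : HuPengCriterion T g₁ g₂ C) :
    QuasiMonotoneDomination T g₁ g₂ := by
  intro k t ht y' δ hδ hδk z z' hrow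
  by_contra! hlt
  set Δ := g₁ t (δ + y') z k - g₂ t y' z' k
  have hΔ : Δ < 0 := sub_neg.mpr hlt
  set ε := -Δ / (|C| + 1)
  have hε : 0 < ε := div_pos (neg_pos.mpr hΔ) (by positivity)
  have hCε : C * ε ≤ -Δ := calc
    C * ε ≤ |C| * ε := mul_le_mul_of_nonneg_right (le_abs_self C) hε.le
    _ ≤ (|C| + 1) * ε := by linarith
    _ = -Δ := mul_div_cancel₀ _ (by positivity)
  have hzero : ∀ i, (if (δ - EuclideanSpace.single k ε) i < 0 then (1:ℝ) else 0)
      * ‖row z i - row z' i‖ ^ 2 = 0 := by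
    intro i
    by_cases hi : i = k
    · simp [hi, hrow]
    · simp [hi, (hδ i).not_gt]
  have htest : -4 * (ε * Δ) ≤ C * ε ^ 2 := by
    have := h t ht (δ - EuclideanSpace.single k ε) y' z z'
    simp only [pos_sub_single hδ hδk hε.le, neg_sub_single hδ hδk hε.le, hzero,
      Finset.sum_const_zero] at this
    simpa [EuclideanSpace.inner_single_left] using this
  nlinarith [mul_pos hε (neg_pos.mpr hΔ)]

lemma QuasiMonotoneDomination.sub_apply_ge {L : ℝ} (h : QuasiMonotoneDomination T g₁ g₂)
    (hLip : ∀ t ∈ Set.Icc (0:ℝ) T, ∀ y : Vec n, ∀ z z' : Mat n d,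
      ‖g₁ t y z - g₁ t y z'‖ ≤ L * ‖z - z'‖)
    {k : Fin n} {t : ℝ} (ht : t ∈ Set.Icc (0:ℝ) T) {y' δ : Vec n} (hδ : ∀ i, 0 ≤ δ i)
    (hδk : δ k = 0) (z z' : Mat n d) :
    -(L * ‖row z k - row z' k‖) ≤ g₁ t (δ + y') z k - g₂ t y' z' k := by
  set zk := updateRow z k (row z' k)
  have hdom : g₂ t y' z' k ≤ g₁ t (δ + y') zk k :=
    h k t ht y' δ hδ hδk zk z' (row_updateRow_self z k _)
  have hchange : |g₁ t (δ + y') z k - g₁ t (δ + y') zk k| ≤ L * ‖row z k - row z' k‖ := calc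
    _ = |(g₁ t (δ + y') z - g₁ t (δ + y') zk) k| := by rw [PiLp.sub_apply]
    _ ≤ ‖g₁ t (δ + y') z - g₁ t (δ + y') zk‖ := by
      rw [← Real.norm_eq_abs]; exact PiLp.norm_apply_le _ k
    _ ≤ L * ‖row z k - row z' k‖ := by
      simpa only [zk, norm_sub_updateRow] using hLip t ht (δ + y') z zk
  linarith [neg_abs_le (g₁ t (δ + y') z k - g₁ t (δ + y') zk k)]

lemma neg_four_mul_le_of_ge {a D L r : ℝ} (ha : 0 ≤ a) (hD : -(L * r) ≤ D) :
    -4 * (a * D) ≤ 2 * r ^ 2 + (2 * L ^ 2 + 1) * a ^ 2 := by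
  nlinarith [mul_le_mul_of_nonneg_left hD ha, sq_nonneg (r - L * a)]

theorem QuasiMonotoneDomination.huPengCriterion {L : ℝ} (h : QuasiMonotoneDomination T g₁ g₂)
    (hLip : ∀ t ∈ Set.Icc (0:ℝ) T, ∀ y : Vec n, ∀ z z' : Mat n d,
      ‖g₁ t y z - g₁ t y z'‖ ≤ L * ‖z - z'‖) :
    HuPengCriterion T g₁ g₂ (2 * L ^ 2 + 1) := by
  intro t ht y y' z z'
  have hcoord : ∀ k, -4 * (neg y k * (g₁ t (pos y + y') z k - g₂ t y' z' k)) ≤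
      2 * ((if y k < 0 then (1:ℝ) else 0) * ‖row z k - row z' k‖ ^ 2)
        + (2 * L ^ 2 + 1) * neg y k ^ 2 := by
    intro k
    by_cases hk : y k < 0
    · have hposk : pos y k = 0 := by simp [pos, hk.le]
      rw [if_pos hk, one_mul]
      exact neg_four_mul_le_of_ge (le_max_right _ _)
        (h.sub_apply_ge hLip ht (fun i => le_max_right _ _) hposk z z')
    · have hnegk : neg y k = 0 := by simp [neg, not_lt.mp hk]
      simp [hnegk, hk]
  calc -4 * ⟪neg y, g₁ t (pos y + y') z - g₂ t y' z'⟫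
      = ∑ k, -4 * (neg y k * (g₁ t (pos y + y') z k - g₂ t y' z' k)) := by
        simp [PiLp.inner_apply, Finset.mul_sum, mul_comm]
    _ ≤ ∑ k, (2 * ((if y k < 0 then (1:ℝ) else 0) * ‖row z k - row z' k‖ ^ 2)
        + (2 * L ^ 2 + 1) * neg y k ^ 2) := Finset.sum_le_sum fun k _ => hcoord k
    _ = _ := by
        rw [Finset.sum_add_distrib, ← Finset.mul_sum, ← Finset.mul_sum,
          EuclideanSpace.real_norm_sq_eq]

end

theorem hu_peng_comparison_criterion_explicit_general
    {n d : ℕ} (T : ℝ)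
    (g₁ g₂ : ℝ → Vec n → Mat n d → Vec n)
    (hg₁ : UniformlyLipschitz T g₁) :
    (∃ C : ℝ, 0 < C ∧ ∀ t ∈ Set.Icc (0:ℝ) T, ∀ y y' : Vec n, ∀ z z' : Mat n d,
        -4 * ⟪neg y, g₁ t (pos y + y') z - g₂ t y' z'⟫ ≤
          2 * ∑ k : Fin n, (if y k < 0 then (1:ℝ) else 0) * ‖row z k - row z' k‖ ^ 2
            + C * ‖neg y‖ ^ 2)
    ↔
    (∀ k : Fin n, ∀ t ∈ Set.Icc (0:ℝ) T, ∀ y' δ : Vec n,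
        (∀ i, 0 ≤ δ i) → δ k = 0 →
        ∀ z z' : Mat n d, row z k = row z' k →
          g₂ t y' z' k ≤ g₁ t (δ + y') z k) := by
  obtain ⟨L, -, hLip⟩ := hg₁
  have hLip_z : ∀ t ∈ Set.Icc (0:ℝ) T, ∀ y : Vec n, ∀ z z' : Mat n d,
      ‖g₁ t y z - g₁ t y z'‖ ≤ L * ‖z - z'‖ := fun t ht y z z' => by
    simpa using hLip t ht y y z z'
  exact ⟨fun ⟨_, _, hC⟩ => HuPengCriterion.quasiMonotoneDomination hC, fun hdom =>
    ⟨2 * L ^ 2 + 1, by positivity, QuasiMonotoneDomination.huPengCriterion hdom hLip_z⟩⟩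

/-- Hu–Peng's criterion for the multidimensional comparison theorem is
equivalent to the explicit quasi-monotone domination condition. -/
theorem hu_peng_comparison_criterion_explicit
    {n d : ℕ} (hn : 0 < n) (hd : 0 < d) (T : ℝ) (hT : 0 < T)
    (g₁ g₂ : ℝ → Vec n → Mat n d → Vec n)
    (hg₁ : UniformlyLipschitz T g₁) (hg₂ : UniformlyLipschitz T g₂) :
    (∃ C : ℝ, 0 < C ∧ ∀ t ∈ Set.Icc (0:ℝ) T, ∀ y y' : Vec n, ∀ z z' : Mat n d,
        -4 * ⟪neg y, g₁ t (pos y + y') z - g₂ t y' z'⟫ ≤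
          2 * ∑ k : Fin n, (if y k < 0 then (1:ℝ) else 0) * ‖row z k - row z' k‖ ^ 2
            + C * ‖neg y‖ ^ 2)
    ↔
    (∀ k : Fin n, ∀ t ∈ Set.Icc (0:ℝ) T, ∀ y' δ : Vec n,
        (∀ i, 0 ≤ δ i) → δ k = 0 →
        ∀ z z' : Mat n d, row z k = row z' k →
          g₂ t y' z' k ≤ g₁ t (δ + y') z k) :=
  hu_peng_comparison_criterion_explicit_general T g₁ g₂ hg₁
end
end

section
/- Let g be a uniformly Lipschitz generator. Then the following two conditions are equivalent. (a) There exists a constant C > 0 such that for all t ∈ [0,T], all y, y′ ∈ ℝⁿ and all z, z′ ∈ ℝ^{n×d}: −4⟨y⁻, g(t, y⁺ + y′, z) − g(t, y′, z′)⟩ ≤ 2·∑_{k=1}^{n} 1_{y_k<0}·|z_k − z′_k|² + C·|y⁻|². (b) For every k ∈ {1,…,n}: g_k depends on z only through its k-th row, i.e. g_k(t,y,z) = g_k(t,y,z′) whenever z_k = z′_k; and g_k is quasi-monotonously increasing, i.e. g_k(t, δ + y, z) ≥ g_k(t, y, z) for all t ∈ [0,T], y ∈ ℝⁿ, z ∈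 ℝ^{n×d} and all δ ∈ ℝⁿ with δ ≥ 0 and δ_k = 0. -/
open scoped RealInnerProductSpace

noncomputable section

/-!
(a) ⇒ (b): for `δ ≥ 0` with `δₖ = 0` and `ε > 0`, the criterion at `y = δ - ε eₖ` (so that
`y⁺ = δ`, `y⁻ = ε eₖ`) reads `4ε (gₖ(t,y',z') - gₖ(t,δ+y',z)) ≤ 2|zₖ - z'ₖ|² + Cε²`.
When `zₖ = z'ₖ`, dividing by `ε` and letting `ε → 0` gives `gₖ(t,y',z') ≤ gₖ(t,δ+y',z)`, which
contains both row dependence (`δ = 0`) and quasi-monotonicity (`z = z'`).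

(b) ⇒ (a): the criterion is a sum over `k` of terms that vanish unless `yₖ < 0`. For such `k`,
`(y⁺)ₖ = 0`, so quasi-monotonicity says the shift `y' ↦ y⁺ + y'` only increases `gₖ`, while
row dependence and the Lipschitz bound give `|gₖ(t,y',z) - gₖ(t,y',z')| ≤ L|zₖ - z'ₖ|`;
with `a = (y⁻)ₖ` and `b = |zₖ - z'ₖ|`, the estimate `4abL ≤ 2b² + 2L²a²` yields the
criterion with `C = 2L² + 1`.
-/

open Filter Topology

namespace ComparisonCriterion

variable {n d : ℕ}

def HuPengCriterion (T C : ℝ) (g : ℝ → Vec n → Mat n d → Vec n) : Prop :=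
  ∀ t ∈ Set.Icc (0:ℝ) T, ∀ y y' : Vec n, ∀ z z' : Mat n d,
    -4 * ⟪neg y, g t (pos y + y') z - g t y' z'⟫ ≤
      2 * ∑ k : Fin n, (if y k < 0 then (1:ℝ) else 0) * ‖row z k - row z' k‖ ^ 2
        + C * ‖neg y‖ ^ 2

def DependsOnOwnRow (T : ℝ) (g : ℝ → Vec n → Mat n d → Vec n) (k : Fin n) : Prop :=
  ∀ t ∈ Set.Icc (0:ℝ) T, ∀ y : Vec n, ∀ z z' : Mat n d,
    row z k = row z' k → g t y z k = g t y z' k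

def QuasiMonotone (T : ℝ) (g : ℝ → Vec n → Mat n d → Vec n) (k : Fin n) : Prop :=
  ∀ t ∈ Set.Icc (0:ℝ) T, ∀ y δ : Vec n,
    (∀ i, 0 ≤ δ i) → δ k = 0 → ∀ z : Mat n d, g t y z k ≤ g t (δ + y) z k

section PosNeg

variable {δ : Vec n} {k : Fin n} {ε : ℝ}

lemma pos_sub_single (hδ : ∀ i, 0 ≤ δ i) (hδk : δ k = 0) (hε : 0 ≤ ε) :
    pos (δ - EuclideanSpace.single k ε) = δ := by
  ext i
  by_cases hi : i = k
  · subst hi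
    simp [pos, hδk, hε]
  · simp [pos, hi, hδ i]

lemma neg_sub_single (hδ : ∀ i, 0 ≤ δ i) (hδk : δ k = 0) (hε : 0 ≤ ε) :
    neg (δ - EuclideanSpace.single k ε) = EuclideanSpace.single k ε := by
  ext i
  by_cases hi : i = k
  · subst hi
    simp [neg, hδk, hε]
  · simp [neg, hi, hδ i]

lemma pos_apply_nonneg (y : Vec n) (i : Fin n) : 0 ≤ pos y i := le_max_right _ _

lemma neg_apply_nonneg (y : Vec n) (i : Fin n) : 0 ≤ neg y i := le_max_right _ _

lemma pos_apply_of_neg {y : Vec n} {i : Fin n} (hy : y i < 0) : pos y i = 0 :=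
  max_eq_right hy.le

lemma neg_apply_of_nonneg {y : Vec n} {i : Fin n} (hy : 0 ≤ y i) : neg y i = 0 :=
  max_eq_right (by linarith)

end PosNeg

lemma nonpos_of_forall_pos_le_mul {x C : ℝ} (h : ∀ ε > 0, x ≤ C * ε) : x ≤ 0 := by
  have hlim : Tendsto (fun ε : ℝ => C * ε) (𝓝[>] 0) (𝓝 0) := by
    simpa using ((continuous_const_mul C).tendsto 0).mono_left nhdsWithin_le_nhds
  exact ge_of_tendsto hlim (eventually_nhdsWithin_of_forall fun ε hε => h ε hε)

namespace HuPengCriterion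

variable {T C : ℝ} {g : ℝ → Vec n → Mat n d → Vec n}

lemma le_of_row_eq (h : HuPengCriterion T C g) {t : ℝ} (ht : t ∈ Set.Icc 0 T) {k : Fin n}
    {y δ : Vec n} (hδ : ∀ i, 0 ≤ δ i) (hδk : δ k = 0) {z z' : Mat n d}
    (hrow : row z k = row z' k) : g t y z' k ≤ g t (δ + y) z k := by
  suffices ∀ ε > 0, 4 * (g t y z' k - g t (δ + y) z k) ≤ C * ε by
    linarith [nonpos_of_forall_pos_le_mul this]
  intro ε hε
  have hsum : ∑ i : Fin n, (if (δ - EuclideanSpace.single k ε) i < 0 then (1:ℝ) else 0) *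
      ‖row z i - row z' i‖ ^ 2 = 0 := by
    refine Finset.sum_eq_zero fun i _ => ?_
    by_cases hi : i = k
    · simp [hi, hrow]
    · simp [hi, (hδ i).not_gt]
  have key := h t ht (δ - EuclideanSpace.single k ε) y z z'
  rw [pos_sub_single hδ hδk hε.le, neg_sub_single hδ hδk hε.le, hsum,
    EuclideanSpace.inner_single_left, PiLp.norm_single, PiLp.sub_apply] at key
  simp only [RCLike.conj_to_real, Real.norm_eq_abs, sq_abs] at key
  nlinarith

lemma dependsOnOwnRow (h : HuPengCriterion T C g) (k : Fin n) : DependsOnOwnRow T g k :=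
  fun t ht y z z' hrow => le_antisymm
    (by simpa using h.le_of_row_eq ht (y := y) (δ := 0) (fun _ => le_rfl) rfl hrow.symm)
    (by simpa using h.le_of_row_eq ht (y := y) (δ := 0) (fun _ => le_rfl) rfl hrow)

lemma quasiMonotone (h : HuPengCriterion T C g) (k : Fin n) : QuasiMonotone T g k :=
  fun _ ht _ _ hδ hδk _ => h.le_of_row_eq ht hδ hδk rfl

end HuPengCriterion

lemma exists_row_eq_norm_sub_eq (z z' : Mat n d) (k : Fin n) :
    ∃ w : Mat n d, row w k = row z' k ∧ ‖z - w‖ = ‖row z k - row z' k‖ := by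
  refine ⟨WithLp.toLp 2 (fun p => if p.1 = k then z' p else z p), ?_, ?_⟩
  · ext j
    simp [row]
  · rw [← sq_eq_sq₀ (norm_nonneg _) (norm_nonneg _), EuclideanSpace.real_norm_sq_eq,
      EuclideanSpace.real_norm_sq_eq, Fintype.sum_prod_type, Finset.sum_eq_single k]
    · simp [row]
    · intro i _ hi
      simp [hi]
    · simp

lemma neg_four_mul_mul_add_le {a X Y L b : ℝ} (ha : 0 ≤ a) (hX : 0 ≤ X) (hY : -Y ≤ L * b) :
    -4 * (a * (X + Y)) ≤ 2 * b ^ 2 + (2 * L ^ 2 + 1) * a ^ 2 := by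
  nlinarith [mul_nonneg ha hX, mul_le_mul_of_nonneg_left hY ha, sq_nonneg (b - L * a)]

section Lipschitz

variable {T L : ℝ} {g : ℝ → Vec n → Mat n d → Vec n}
  (hL : ∀ t ∈ Set.Icc (0:ℝ) T, ∀ y y' : Vec n, ∀ z z' : Mat n d,
    ‖g t y z - g t y' z'‖ ≤ L * (‖y - y'‖ + ‖z - z'‖))
include hL

lemma DependsOnOwnRow.abs_sub_le {k : Fin n} (hk : DependsOnOwnRow T g k) {t : ℝ}
    (ht : t ∈ Set.Icc 0 T) (y : Vec n) (z z' : Mat n d) :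
    |g t y z k - g t y z' k| ≤ L * ‖row z k - row z' k‖ := by
  obtain ⟨w, hw, hzw⟩ := exists_row_eq_norm_sub_eq z z' k
  calc |g t y z k - g t y z' k| = ‖(g t y z - g t y w) k‖ := by
        rw [← hk t ht y w z' hw, PiLp.sub_apply, Real.norm_eq_abs]
    _ ≤ ‖g t y z - g t y w‖ := PiLp.norm_apply_le _ k
    _ ≤ L * (‖y - y‖ + ‖z - w‖) := hL t ht y y z w
    _ = L * ‖row z k - row z' k‖ := by rw [sub_self, norm_zero, zero_add, hzw]

lemma neg_four_mul_neg_apply_le {k : Fin n} (hrow : DependsOnOwnRow T g k)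
    (hmono : QuasiMonotone T g k) {t : ℝ} (ht : t ∈ Set.Icc 0 T) (y y' : Vec n)
    (z z' : Mat n d) :
    -4 * (neg y k * (g t (pos y + y') z k - g t y' z' k)) ≤
      2 * ((if y k < 0 then (1:ℝ) else 0) * ‖row z k - row z' k‖ ^ 2)
        + (2 * L ^ 2 + 1) * neg y k ^ 2 := by
  by_cases hyk : y k < 0
  · have hX : 0 ≤ g t (pos y + y') z k - g t y' z k :=
      sub_nonneg.2 (hmono t ht y' (pos y) (pos_apply_nonneg y) (pos_apply_of_neg hyk) z)
    have hY : -(g t y' z k - g t y' z' k) ≤ L * ‖row z k - row z' k‖ :=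
      (neg_le_abs _).trans (hrow.abs_sub_le hL ht y' z z')
    convert neg_four_mul_mul_add_le (neg_apply_nonneg y k) hX hY using 3
    · ring
    · simp [hyk]
  · simp [hyk, neg_apply_of_nonneg (not_lt.1 hyk)]

lemma huPengCriterion_of_forall (hrow : ∀ k, DependsOnOwnRow T g k)
    (hmono : ∀ k, QuasiMonotone T g k) : HuPengCriterion T (2 * L ^ 2 + 1) g := by
  intro t ht y y' z z'
  rw [PiLp.inner_apply, EuclideanSpace.real_norm_sq_eq (neg y), Finset.mul_sum, Finset.mul_sum,
    Finset.mul_sum, ← Finset.sum_add_distrib]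
  refine Finset.sum_le_sum fun k _ => ?_
  simpa only [Real.inner_apply, PiLp.sub_apply] using
    neg_four_mul_neg_apply_le hL (hrow k) (hmono k) ht y y' z z'

end Lipschitz

end ComparisonCriterion

theorem comparison_criterion_single_generator_general
    {n d : ℕ} (T : ℝ)
    (g : ℝ → Vec n → Mat n d → Vec n) (hg : UniformlyLipschitz T g) :
    (∃ C : ℝ, 0 < C ∧ ∀ t ∈ Set.Icc (0:ℝ) T, ∀ y y' : Vec n, ∀ z z' : Mat n d,
        -4 * ⟪neg y, g t (pos y + y') z - g t y' z'⟫ ≤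
          2 * ∑ k : Fin n, (if y k < 0 then (1:ℝ) else 0) * ‖row z k - row z' k‖ ^ 2
            + C * ‖neg y‖ ^ 2)
    ↔
    (∀ k : Fin n,
      (∀ t ∈ Set.Icc (0:ℝ) T, ∀ y : Vec n, ∀ z z' : Mat n d,
        row z k = row z' k → g t y z k = g t y z' k) ∧
      (∀ t ∈ Set.Icc (0:ℝ) T, ∀ y δ : Vec n,
        (∀ i, 0 ≤ δ i) → δ k = 0 →
        ∀ z : Mat n d, g t y z k ≤ g t (δ + y) z k)) := by
  obtain ⟨L, -, hL⟩ := hg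
  constructor
  · rintro ⟨C, -, h : ComparisonCriterion.HuPengCriterion T C g⟩ k
    exact ⟨h.dependsOnOwnRow k, h.quasiMonotone k⟩
  · intro h
    exact ⟨2 * L ^ 2 + 1, by positivity,
      ComparisonCriterion.huPengCriterion_of_forall hL (fun k => (h k).1) (fun k => (h k).2)⟩

/-- Hu–Peng's criterion for the comparison theorem with a single generator
is equivalent to: each component depends on `z` only through its own row and is
quasi-monotonously increasing. -/
theorem comparison_criterion_single_generator
    {n d : ℕ} (hn : 0 < n) (hd : 0 < d) (T : ℝ) (hT : 0 < T)
    (g : ℝ → Vec n → Mat n d → Vec n) (hg : UniformlyLipschitz T g) :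
    (∃ C : ℝ, 0 < C ∧ ∀ t ∈ Set.Icc (0:ℝ) T, ∀ y y' : Vec n, ∀ z z' : Mat n d,
        -4 * ⟪neg y, g t (pos y + y') z - g t y' z'⟫ ≤
          2 * ∑ k : Fin n, (if y k < 0 then (1:ℝ) else 0) * ‖row z k - row z' k‖ ^ 2
            + C * ‖neg y‖ ^ 2)
    ↔
    (∀ k : Fin n,
      (∀ t ∈ Set.Icc (0:ℝ) T, ∀ y : Vec n, ∀ z z' : Mat n d,
        row z k = row z' k → g t y z k = g t y z' k) ∧
      (∀ t ∈ Set.Icc (0:ℝ) T, ∀ y δ : Vec n,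
        (∀ i, 0 ≤ δ i) → δ k = 0 →
        ∀ z : Mat n d, g t y z k ≤ g t (δ + y) z k)) :=
  comparison_criterion_single_generator_general T g hg
end
end

section
/- Let g¹ and g² be uniformly Lipschitz generators. Then the following two conditions are equivalent. (a) There exists a constant C > 0 such that for all t ∈ [0,T], all y, y′ ∈ ℝⁿ and all z, z′ ∈ ℝ^{n×d}: 4⟨y, g¹(t, y′, z) − g²(t, y′, z′)⟩ ≤ 2·∑_{k=1}^{n} |z_k − z′_k|² + C·|y|². (b) g¹(t, y, z) = g²(t, y, z) for all t ∈ [0,T], y ∈ ℝⁿ and z ∈ ℝ^{n×d}. (This is the deterministic core of the uniqueness theorem for generators of multidimensional BSDEs.) -/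
/-!
Taking `z = z'` in (a) kills the `z`-term, leaving `⟪y, g¹ - g²⟫ ≤ (C/4)‖y‖²` for every `y`;
testing with small multiples of `g¹ - g²` forces it to vanish. Conversely, if `g¹ = g²`, then
`g¹(t, y', z) - g²(t, y', z')` is bounded by `L‖z - z'‖`, and Cauchy–Schwarz with
`4 L ab ≤ 2 b² + 2 L² a²` gives (a) with `C = 2L² + 1`, the `z`-sum being `‖z - z'‖²`.
-/

open scoped RealInnerProductSpace

noncomputable section

lemma row_sub {n d : ℕ} (z z' : Mat n d) (k : Fin n) : row (z - z') k = row z k - row z' k := rfl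

lemma sum_norm_row_sq {n d : ℕ} (z : Mat n d) : ∑ k : Fin n, ‖row z k‖ ^ 2 = ‖z‖ ^ 2 := by
  simp only [EuclideanSpace.norm_sq_eq, row, Fintype.sum_prod_type]

lemma sum_norm_row_sub_sq {n d : ℕ} (z z' : Mat n d) :
    ∑ k : Fin n, ‖row z k - row z' k‖ ^ 2 = ‖z - z'‖ ^ 2 := by
  simp only [← row_sub, sum_norm_row_sq]

section InnerProductSpace

variable {E : Type*} [NormedAddCommGroup E] [InnerProductSpace ℝ E]

/-- Testing against `y = s • v` with `s = 1 / (2 (|C| + 1))` gives `‖v‖² ≤ ‖v‖² / 2`. -/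
lemma eq_zero_of_inner_le_mul_norm_sq {v : E} {C : ℝ} (h : ∀ y : E, ⟪y, v⟫ ≤ C * ‖y‖ ^ 2) :
    v = 0 := by
  set s : ℝ := 1 / (2 * (|C| + 1)) with hs
  have hs_pos : 0 < s := by positivity
  have hCs : C * s ≤ 1 / 2 := by
    rw [hs, ← mul_div_assoc, mul_one, div_le_iff₀ (by positivity)]
    nlinarith [le_abs_self C]
  have key := h (s • v)
  rw [real_inner_smul_left, real_inner_self_eq_norm_sq, norm_smul, Real.norm_of_nonneg hs_pos.le,
    mul_pow] at key
  have hv : ‖v‖ ^ 2 ≤ 0 := by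
    nlinarith [mul_le_mul_of_nonneg_right hCs (by positivity : 0 ≤ s * ‖v‖ ^ 2)]
  simpa using hv

lemma four_mul_inner_le_of_norm_le {y u : E} {L b : ℝ} (hu : ‖u‖ ≤ L * b) :
    4 * ⟪y, u⟫ ≤ 2 * b ^ 2 + 2 * L ^ 2 * ‖y‖ ^ 2 :=
  calc 4 * ⟪y, u⟫ ≤ 4 * (‖y‖ * ‖u‖) := by gcongr; exact real_inner_le_norm y u
    _ ≤ 4 * (‖y‖ * (L * b)) := by gcongr
    _ ≤ 2 * b ^ 2 + 2 * L ^ 2 * ‖y‖ ^ 2 := by nlinarith [sq_nonneg (b - L * ‖y‖)]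

end InnerProductSpace

lemma UniformlyLipschitz.exists_lipschitz_in_z {n d : ℕ} {T : ℝ} {g : ℝ → Vec n → Mat n d → Vec n}
    (hg : UniformlyLipschitz T g) :
    ∃ L : ℝ, ∀ t ∈ Set.Icc (0:ℝ) T, ∀ y : Vec n, ∀ z z' : Mat n d,
      ‖g t y z - g t y z'‖ ≤ L * ‖z - z'‖ := by
  obtain ⟨L, -, hL⟩ := hg
  refine ⟨L, fun t ht y z z' => ?_⟩
  simpa using hL t ht y y z z'

theorem uniqueness_criterion_generators_general
    {n d : ℕ} (T : ℝ)
    (g₁ g₂ : ℝ → Vec n → Mat n d → Vec n)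
    (hg₁ : UniformlyLipschitz T g₁) :
    (∃ C : ℝ, 0 < C ∧ ∀ t ∈ Set.Icc (0:ℝ) T, ∀ y y' : Vec n, ∀ z z' : Mat n d,
        4 * ⟪y, g₁ t y' z - g₂ t y' z'⟫ ≤
          2 * ∑ k : Fin n, ‖row z k - row z' k‖ ^ 2 + C * ‖y‖ ^ 2)
    ↔
    (∀ t ∈ Set.Icc (0:ℝ) T, ∀ y : Vec n, ∀ z : Mat n d, g₁ t y z = g₂ t y z) := by
  constructor
  · rintro ⟨C, -, hC⟩ t ht y z
    rw [← sub_eq_zero]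
    refine eq_zero_of_inner_le_mul_norm_sq (C := C / 4) fun w => ?_
    have hdiag := hC t ht w y z z
    rw [sum_norm_row_sub_sq, sub_self, norm_zero] at hdiag
    linarith
  · intro h
    obtain ⟨L, hL⟩ := hg₁.exists_lipschitz_in_z
    refine ⟨2 * L ^ 2 + 1, by positivity, fun t ht y y' z z' => ?_⟩
    rw [← h t ht y' z', sum_norm_row_sub_sq]
    have hyoung := four_mul_inner_le_of_norm_le (y := y) (hL t ht y' z z')
    nlinarith [sq_nonneg ‖y‖]

/-- the deterministic core of the uniqueness theorem for generators of
multidimensional BSDEs. -/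
theorem uniqueness_criterion_generators
    {n d : ℕ} (hn : 0 < n) (hd : 0 < d) (T : ℝ) (hT : 0 < T)
    (g₁ g₂ : ℝ → Vec n → Mat n d → Vec n)
    (hg₁ : UniformlyLipschitz T g₁) (hg₂ : UniformlyLipschitz T g₂) :
    (∃ C : ℝ, 0 < C ∧ ∀ t ∈ Set.Icc (0:ℝ) T, ∀ y y' : Vec n, ∀ z z' : Mat n d,
        4 * ⟪y, g₁ t y' z - g₂ t y' z'⟫ ≤
          2 * ∑ k : Fin n, ‖row z k - row z' k‖ ^ 2 + C * ‖y‖ ^ 2)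
    ↔
    (∀ t ∈ Set.Icc (0:ℝ) T, ∀ y : Vec n, ∀ z : Mat n d, g₁ t y z = g₂ t y z) :=
  uniqueness_criterion_generators_general T g₁ g₂ hg₁
end
end

section
/- Let g be a uniformly Lipschitz generator. Then the following two conditions are equivalent. (a) There exists a constant C > 0 such that for all t ∈ [0,T], all y ∈ ℝⁿ and all z ∈ ℝ^{n×d}: 4⟨y⁺, g(t, −y⁻, z)⟩ ≤ 2·∑_{k=1}^{n} 1_{y_k>0}·|z_k|² + C·|y⁺|². (b) For every k ∈ {1,…,n}, every t ∈ [0,T], every δ ∈ ℝⁿ with δ ≥ 0 and δ_k = 0, and every ζ ∈ ℝ^{n×d} with ζ_k = 0 (k-th row zero), one has g_k(t, −δ, ζ) ≤ 0. (This is the deterministic core of the characterization of nonpositivity of solutions to multidimensional BSDEs, obtained from the nonnegative case by replacing g with ḡ(t,y,z) := −g(t,−y,−z).) -/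
/-!
(a) ⇒ (b): testing (a) with `y = ε eₖ - δ` and `z = ζ` kills the indicator sum and leaves
`4 ε gₖ(t, -δ, ζ) ≤ C ε²`; let `ε → 0`.

(b) ⇒ (a): coordinatewise. Where `yₖ > 0` we have `(y⁻)ₖ = 0`, so erasing the `k`-th row of `z`
and applying (b) gives `gₖ(t, -y⁻, z) ≤ L |zₖ|` by the Lipschitz bound; then
`4 yₖ L |zₖ| ≤ 2 |zₖ|² + 2 L² yₖ²`, and `C = 2L² + 1` works.
-/

open scoped RealInnerProductSpace

noncomputable section

open Filter Topology

lemma nonpos_of_forall_pos_le_mul {a c : ℝ} (h : ∀ ε > 0, a ≤ c * ε) : a ≤ 0 := by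
  have hlim : Tendsto (fun ε => c * ε) (𝓝[>] 0) (𝓝 0) := by
    simpa using ((continuous_const_mul c).tendsto 0).mono_left nhdsWithin_le_nhds
  exact ge_of_tendsto hlim (eventually_nhdsWithin_of_forall h)

lemma four_mul_le_of_le_mul {p G L a : ℝ} (hp : 0 ≤ p) (hG : G ≤ L * a) :
    4 * (p * G) ≤ 2 * a ^ 2 + 2 * L ^ 2 * p ^ 2 := by
  nlinarith [mul_le_mul_of_nonneg_left hG hp, sq_nonneg (a - L * p)]

section PositiveNegativeParts

variable {n : ℕ} {k : Fin n} {ε : ℝ} {δ : Vec n}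

lemma pos_single_sub (hε : 0 ≤ ε) (hδ : ∀ i, 0 ≤ δ i) (hδk : δ k = 0) :
    pos (EuclideanSpace.single k ε - δ) = EuclideanSpace.single k ε := by
  ext i
  by_cases hi : i = k
  · subst hi; simp [pos, hδk, hε]
  · simp [pos, hi, hδ i]

lemma neg_single_sub (hε : 0 ≤ ε) (hδ : ∀ i, 0 ≤ δ i) (hδk : δ k = 0) :
    neg (EuclideanSpace.single k ε - δ) = δ := by
  ext i
  by_cases hi : i = k
  · subst hi; simp [neg, hδk, hε]
  · simp [neg, hi, hδ i]

end PositiveNegativeParts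

section Rows

variable {n d : ℕ}

def eraseRow (z : Mat n d) (k : Fin n) : Mat n d :=
  WithLp.toLp 2 fun p => if p.1 = k then 0 else z p

@[simp] lemma row_eraseRow_self (z : Mat n d) (k : Fin n) : row (eraseRow z k) k = 0 := by
  ext j; simp [row, eraseRow]

lemma norm_sub_eraseRow (z : Mat n d) (k : Fin n) : ‖z - eraseRow z k‖ = ‖row z k‖ := by
  rw [← sq_eq_sq₀ (norm_nonneg _) (norm_nonneg _), EuclideanSpace.real_norm_sq_eq,
    EuclideanSpace.real_norm_sq_eq, Fintype.sum_prod_type, Finset.sum_eq_single k]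
  · simp [eraseRow, row]
  · intro i _ hik; simp [eraseRow, hik]
  · simp

end Rows

lemma UniformlyLipschitz.exists_apply_le_add {n d : ℕ} {T : ℝ} {g : ℝ → Vec n → Mat n d → Vec n}
    (hg : UniformlyLipschitz T g) :
    ∃ L : ℝ, ∀ t ∈ Set.Icc (0:ℝ) T, ∀ y : Vec n, ∀ z ζ : Mat n d, ∀ k : Fin n,
      g t y z k ≤ g t y ζ k + L * ‖z - ζ‖ := by
  obtain ⟨L, -, hL⟩ := hg
  refine ⟨L, fun t ht y z ζ k => ?_⟩
  have hcoord : g t y z k - g t y ζ k ≤ L * (‖y - y‖ + ‖z - ζ‖) :=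
    (le_abs_self _).trans <| (PiLp.norm_apply_le (g t y z - g t y ζ) k).trans (hL t ht y y z ζ)
  rw [sub_self, norm_zero, zero_add] at hcoord
  linarith

section Criterion

variable {n d : ℕ} {g : ℝ → Vec n → Mat n d → Vec n} {t : ℝ}

theorem apply_nonpos_of_pos_inner_le {C : ℝ}
    (h : ∀ y : Vec n, ∀ z : Mat n d, 4 * ⟪pos y, g t (-(neg y)) z⟫ ≤
      2 * ∑ k : Fin n, (if 0 < y k then (1:ℝ) else 0) * ‖row z k‖ ^ 2 + C * ‖pos y‖ ^ 2)
    {k : Fin n} {δ : Vec n} (hδ : ∀ i, 0 ≤ δ i) (hδk : δ k = 0)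
    {ζ : Mat n d} (hζ : row ζ k = 0) :
    g t (-δ) ζ k ≤ 0 := by
  refine nonpos_of_forall_pos_le_mul (c := C / 4) fun ε hε => ?_
  set y := EuclideanSpace.single k ε - δ
  have hsum : ∑ i, (if 0 < y i then (1:ℝ) else 0) * ‖row ζ i‖ ^ 2 = 0 := by
    refine Finset.sum_eq_zero fun i _ => ?_
    by_cases hi : i = k
    · simp [hi, hζ]
    · simp [y, hi, hδ i]
  have hy := h y ζ
  rw [pos_single_sub hε.le hδ hδk, neg_single_sub hε.le hδ hδk, hsum,
    EuclideanSpace.inner_single_left, PiLp.norm_single] at hy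
  simp only [conj_trivial, Real.norm_eq_abs, sq_abs, mul_zero, zero_add] at hy
  nlinarith

theorem pos_inner_le_of_apply_nonpos {L : ℝ}
    (hLip : ∀ y : Vec n, ∀ z ζ : Mat n d, ∀ k, g t y z k ≤ g t y ζ k + L * ‖z - ζ‖)
    (hb : ∀ k : Fin n, ∀ δ : Vec n, (∀ i, 0 ≤ δ i) → δ k = 0 →
      ∀ ζ : Mat n d, row ζ k = 0 → g t (-δ) ζ k ≤ 0)
    (y : Vec n) (z : Mat n d) :
    4 * ⟪pos y, g t (-(neg y)) z⟫ ≤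
      2 * ∑ k : Fin n, (if 0 < y k then (1:ℝ) else 0) * ‖row z k‖ ^ 2
        + 2 * L ^ 2 * ‖pos y‖ ^ 2 := by
  rw [PiLp.inner_apply, EuclideanSpace.real_norm_sq_eq, Finset.mul_sum, Finset.mul_sum,
    Finset.mul_sum, ← Finset.sum_add_distrib]
  refine Finset.sum_le_sum fun k _ => ?_
  simp only [pos, RCLike.inner_apply, conj_trivial]
  by_cases hk : 0 < y k
  · have hnegk : neg y k = 0 := by simp [neg, hk.le]
    have hg : g t (-(neg y)) z k ≤ L * ‖row z k‖ :=
      calc g t (-(neg y)) z k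
          ≤ g t (-(neg y)) (eraseRow z k) k + L * ‖z - eraseRow z k‖ := hLip _ _ _ k
        _ ≤ 0 + L * ‖row z k‖ := by
          rw [norm_sub_eraseRow]
          gcongr
          exact hb k (neg y) (fun i => le_max_right _ _) hnegk _ (row_eraseRow_self z k)
        _ = L * ‖row z k‖ := zero_add _
    simpa [hk, hk.le, mul_comm] using four_mul_le_of_le_mul hk.le hg
  · simp [hk, not_lt.mp hk]

end Criterion

theorem nonpositivity_criterion_general
    {n d : ℕ} (T : ℝ)
    (g : ℝ → Vec n → Mat n d → Vec n) (hg : UniformlyLipschitz T g) :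
    (∃ C : ℝ, 0 < C ∧ ∀ t ∈ Set.Icc (0:ℝ) T, ∀ y : Vec n, ∀ z : Mat n d,
        4 * ⟪pos y, g t (-(neg y)) z⟫ ≤
          2 * ∑ k : Fin n, (if 0 < y k then (1:ℝ) else 0) * ‖row z k‖ ^ 2
            + C * ‖pos y‖ ^ 2)
    ↔
    (∀ k : Fin n, ∀ t ∈ Set.Icc (0:ℝ) T, ∀ δ : Vec n,
        (∀ i, 0 ≤ δ i) → δ k = 0 →
        ∀ ζ : Mat n d, row ζ k = 0 → g t (-δ) ζ k ≤ 0) := by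
  constructor
  · rintro ⟨C, -, hC⟩ k t ht δ hδ hδk ζ hζ
    exact apply_nonpos_of_pos_inner_le (hC t ht) hδ hδk hζ
  · intro hb
    obtain ⟨L, hL⟩ := hg.exists_apply_le_add
    refine ⟨2 * L ^ 2 + 1, by positivity, fun t ht y z => ?_⟩
    calc 4 * ⟪pos y, g t (-(neg y)) z⟫
        ≤ 2 * ∑ k : Fin n, (if 0 < y k then (1:ℝ) else 0) * ‖row z k‖ ^ 2
            + 2 * L ^ 2 * ‖pos y‖ ^ 2 :=
          pos_inner_le_of_apply_nonpos (hL t ht) (fun k => hb k t ht) y z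
      _ ≤ _ := by gcongr; linarith

/-- the deterministic core of the characterization of nonpositivity of
solutions to multidimensional BSDEs. -/
theorem nonpositivity_criterion
    {n d : ℕ} (hn : 0 < n) (hd : 0 < d) (T : ℝ) (hT : 0 < T)
    (g : ℝ → Vec n → Mat n d → Vec n) (hg : UniformlyLipschitz T g) :
    (∃ C : ℝ, 0 < C ∧ ∀ t ∈ Set.Icc (0:ℝ) T, ∀ y : Vec n, ∀ z : Mat n d,
        4 * ⟪pos y, g t (-(neg y)) z⟫ ≤
          2 * ∑ k : Fin n, (if 0 < y k then (1:ℝ) else 0) * ‖row z k‖ ^ 2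
            + C * ‖pos y‖ ^ 2)
    ↔
    (∀ k : Fin n, ∀ t ∈ Set.Icc (0:ℝ) T, ∀ δ : Vec n,
        (∀ i, 0 ≤ δ i) → δ k = 0 →
        ∀ ζ : Mat n d, row ζ k = 0 → g t (-δ) ζ k ≤ 0) :=
  nonpositivity_criterion_general T g hg
end
end

section
/- Let E be a real vector space and order ℝⁿ componentwise. Let ρ : E → ℝⁿ be convex (ρ(λξ + (1−λ)η) ≤ λρ(ξ) + (1−λ)ρ(η) for all ξ, η ∈ E and λ ∈ [0,1]) with ρ(0) = 0. Then for all γ_A > 0, γ_B > 0 and all ξ, η ∈ E: (γ_A + γ_B)·ρ(ξ/(γ_A + γ_B)) ≤ γ_A·ρ((ξ − η)/γ_A) + γ_B·ρ(η/γ_B), and equality holds for the optimal transfer η* = (γ_B/(γ_A + γ_B))·ξ. Consequently the inf-convolution of the γ_A-tolerant and γ_B-tolerant risk measures derived from ρ equals the (γ_A + γ_B)-tolerant risk measure: inf over η of the right-hand side equals the left-hand side and is attained at η*. -/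
/-!
Scaling by `γ` turns a convex `ρ` into its perspective `γ • ρ (γ⁻¹ • ·)`, and perspectives of a
convex function are subadditive jointly in the tolerance and the argument: writing
`(γA + γB)⁻¹ • ξ` as the convex combination of `γA⁻¹ • (ξ - η)` and `γB⁻¹ • η` with weights
`γA / (γA + γB)` and `γB / (γA + γB)` gives the inequality. Splitting `ξ` in the proportion of the
tolerances makes both arguments equal to `(γA + γB)⁻¹ • ξ`, so the bound is attained.
-/

open Set

section TolerantRisk

variable {𝕜 E β : Type*} [Field 𝕜] [AddCommMonoid E] [Module 𝕜 E] [AddCommMonoid β] [Module 𝕜 β]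

def tolerantRisk (ρ : E → β) (γ : 𝕜) (ξ : E) : β :=
  γ • ρ (γ⁻¹ • ξ)

theorem tolerantRisk_div_smul (ρ : E → β) (a c : 𝕜) (ξ : E) :
    tolerantRisk ρ a ((a / c) • ξ) = a • ρ (c⁻¹ • ξ) := by
  rcases eq_or_ne a 0 with rfl | ha
  · simp [tolerantRisk]
  · rw [tolerantRisk, smul_smul, inv_mul_eq_div, div_div_cancel_left' ha]

theorem tolerantRisk_add_eq_of_proportional (ρ : E → β) (a b : 𝕜) (ξ : E) :
    tolerantRisk ρ (a + b) ξ =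
      tolerantRisk ρ a ((a / (a + b)) • ξ) + tolerantRisk ρ b ((b / (a + b)) • ξ) := by
  rw [tolerantRisk_div_smul, tolerantRisk_div_smul, ← add_smul, tolerantRisk]

theorem ConvexOn.tolerantRisk_add_le [LinearOrder 𝕜] [IsStrictOrderedRing 𝕜] [PartialOrder β]
    [PosSMulMono 𝕜 β] {ρ : E → β} (hρ : ConvexOn 𝕜 univ ρ)
    {a b : 𝕜} (ha : 0 < a) (hb : 0 < b) (ξ η : E) :
    tolerantRisk ρ (a + b) (ξ + η) ≤ tolerantRisk ρ a ξ + tolerantRisk ρ b η := by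
  have hab : 0 < a + b := add_pos ha hb
  have hcomb : (a / (a + b)) • (a⁻¹ • ξ) + (b / (a + b)) • (b⁻¹ • η) = (a + b)⁻¹ • (ξ + η) := by
    rw [smul_smul, smul_smul, div_mul_eq_mul_div, div_mul_eq_mul_div, mul_inv_cancel₀ ha.ne',
      mul_inv_cancel₀ hb.ne', one_div, smul_add]
  have hconv := hρ.2 (mem_univ (a⁻¹ • ξ)) (mem_univ (b⁻¹ • η)) (div_pos ha hab).le
    (div_pos hb hab).le (by rw [← add_div, div_self hab.ne'])
  rw [hcomb] at hconv
  calc tolerantRisk ρ (a + b) (ξ + η)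
      ≤ (a + b) • ((a / (a + b)) • ρ (a⁻¹ • ξ) + (b / (a + b)) • ρ (b⁻¹ • η)) :=
        smul_le_smul_of_nonneg_left hconv hab.le
    _ = tolerantRisk ρ a ξ + tolerantRisk ρ b η := by
        rw [smul_add, smul_smul, smul_smul, mul_div_cancel₀ _ hab.ne', mul_div_cancel₀ _ hab.ne']
        rfl

end TolerantRisk

theorem infConvolution_tolerant_risk_measures_general
    {E : Type*} [AddCommGroup E] [Module ℝ E] {n : ℕ}
    (ρ : E → (Fin n → ℝ))
    (hconv : ∀ ξ η : E, ∀ lam ∈ Set.Icc (0:ℝ) 1,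
      ρ (lam • ξ + (1 - lam) • η) ≤ lam • ρ ξ + (1 - lam) • ρ η)
    (γA γB : ℝ) (hA : 0 < γA) (hB : 0 < γB) (ξ : E) :
    (∀ η : E,
      (γA + γB) • ρ ((γA + γB)⁻¹ • ξ) ≤
        γA • ρ (γA⁻¹ • (ξ - η)) + γB • ρ (γB⁻¹ • η)) ∧
    (γA + γB) • ρ ((γA + γB)⁻¹ • ξ) =
      γA • ρ (γA⁻¹ • (ξ - (γB / (γA + γB)) • ξ)) +
        γB • ρ (γB⁻¹ • ((γB / (γA + γB)) • ξ)) ∧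
    IsLeast {v : Fin n → ℝ | ∃ η : E,
        v = γA • ρ (γA⁻¹ • (ξ - η)) + γB • ρ (γB⁻¹ • η)}
      ((γA + γB) • ρ ((γA + γB)⁻¹ • ξ)) := by
  have hρ : ConvexOn ℝ univ ρ := by
    refine ⟨convex_univ, fun x _ y _ a b ha _ hab => ?_⟩
    obtain rfl : b = 1 - a := by linarith
    exact hconv x y a ⟨ha, by linarith⟩
  have hle (η : E) : tolerantRisk ρ (γA + γB) ξ ≤
      tolerantRisk ρ γA (ξ - η) + tolerantRisk ρ γB η := by
    simpa using hρ.tolerantRisk_add_le hA hB (ξ - η) η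
  have hsplit : ξ - (γB / (γA + γB)) • ξ = (γA / (γA + γB)) • ξ := by
    rw [sub_eq_iff_eq_add, ← add_smul, ← add_div, div_self (by positivity), one_smul]
  have heq : tolerantRisk ρ (γA + γB) ξ =
      tolerantRisk ρ γA (ξ - (γB / (γA + γB)) • ξ) +
        tolerantRisk ρ γB ((γB / (γA + γB)) • ξ) := by
    rw [hsplit, tolerantRisk_add_eq_of_proportional]
  exact ⟨hle, heq, ⟨_, heq⟩, by rintro _ ⟨η, rfl⟩; exact hle η⟩

/-- inf-convolution of γ-tolerant risk measures derived from a convex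
`ρ : E → ℝⁿ` with `ρ(0)=0`: the γ_A-tolerant and γ_B-tolerant measures inf-convolve to
the (γ_A+γ_B)-tolerant one, with optimal transfer `η* = (γ_B/(γ_A+γ_B))·ξ`. -/
theorem infConvolution_tolerant_risk_measures
    {E : Type*} [AddCommGroup E] [Module ℝ E] {n : ℕ}
    (ρ : E → (Fin n → ℝ))
    (hconv : ∀ ξ η : E, ∀ lam ∈ Set.Icc (0:ℝ) 1,
      ρ (lam • ξ + (1 - lam) • η) ≤ lam • ρ ξ + (1 - lam) • ρ η)
    (h0 : ρ 0 = 0)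
    (γA γB : ℝ) (hA : 0 < γA) (hB : 0 < γB) (ξ : E) :
    (∀ η : E,
      (γA + γB) • ρ ((γA + γB)⁻¹ • ξ) ≤
        γA • ρ (γA⁻¹ • (ξ - η)) + γB • ρ (γB⁻¹ • η)) ∧
    (γA + γB) • ρ ((γA + γB)⁻¹ • ξ) =
      γA • ρ (γA⁻¹ • (ξ - (γB / (γA + γB)) • ξ)) +
        γB • ρ (γB⁻¹ • ((γB / (γA + γB)) • ξ)) ∧
    IsLeast {v : Fin n → ℝ | ∃ η : E,
        v = γA • ρ (γA⁻¹ • (ξ - η)) + γB • ρ (γB⁻¹ • η)}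
      ((γA + γB) • ρ ((γA + γB)⁻¹ • ξ)) :=
  infConvolution_tolerant_risk_measures_general ρ hconv γA γB hA hB ξ
end
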